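/- For k = 2 the weak and strong notions coincide: a pair (X, d) with X finite and d : X² → ℝ is a pseudo 2-metric space (i.e., a finite pseudometric space, where the simplex inequality is the triangle inequality) if and only if it is a strong pseudo 2-metric space. In particular, every finite pseudometric satisfies the strong simplex inequality: for all s, t ∈ X and every 1-chain α on X with ∂α = ∂1_{(s,t)} (i.e., α is a unit (s,t)-flow), d(s,t) ≤ Σ_τ |α(τ)|·d(τ), the sum over all 2-element subsets τ of X. -/

import Mathlib

open scoped BigOperators

/-- An alternating real-valued function on `j`-tuples of `X`
(a `(j-1)`-dimensional chain on the complete complex on `X`). -/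
def AltChain {X : Type*} {j : ℕ} (α : (Fin j → X) → ℝ) : Prop :=
  ∀ (π : Equiv.Perm (Fin j)) (x : Fin j → X),
    α (x ∘ π) = ((Equiv.Perm.sign π : ℤ) : ℝ) * α x

/-- The boundary operator: `(∂α)(y₁,…,y_j) = ∑_{x ∈ X} α(x, y₁, …, y_j)`. -/
noncomputable def bdry {X : Type*} [Fintype X] {j : ℕ}
    (α : (Fin (j + 1) → X) → ℝ) : (Fin j → X) → ℝ :=
  fun y => ∑ x : X, α (Fin.cons x y)

/-- The elementary chain `1_t`: value `sign π` on the reordering of `t` by `π`,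
and `0` on all other tuples. -/
noncomputable def unitChain {X : Type*} [DecidableEq X] {j : ℕ} (t : Fin j → X) :
    (Fin j → X) → ℝ :=
  fun s => ∑ π : Equiv.Perm (Fin j),
    if s = t ∘ π then ((Equiv.Perm.sign π : ℤ) : ℝ) else 0

/-- The coboundary operator:
`(δf)(x₁,…,x_{j+2}) = ∑ᵢ (-1)^(i+1) f(x₁,…,x̂ᵢ,…,x_{j+2})` (`0`-indexed sign `(-1)^i`). -/
noncomputable def cobdry {X : Type*} {j : ℕ}
    (f : (Fin (j + 1) → X) → ℝ) : (Fin (j + 2) → X) → ℝ :=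
  fun x => ∑ i : Fin (j + 2), (-1 : ℝ) ^ (i : ℕ) * f (x ∘ i.succAbove)

/-- A pseudo metric of arity `K` (a pseudo `K`-metric): nonnegative, vanishing on
non-injective tuples, permutation invariant, satisfying the simplex inequality. -/
structure IsPseudoMetric {X : Type*} (K : ℕ) (d : (Fin K → X) → ℝ) : Prop where
  nonneg : ∀ x, 0 ≤ d x
  eq_zero : ∀ x, ¬ Function.Injective x → d x = 0
  perm : ∀ (π : Equiv.Perm (Fin K)) (x), d (x ∘ π) = d x
  simplex : ∀ (x : Fin K → X) (y : X),
    d x ≤ ∑ i : Fin K, d (Function.update x i y)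

/-- A strong pseudo metric of arity `k + 1` (a strong pseudo `(k+1)`-metric).
The strong simplex inequality `d t ≤ ∑_τ |α(τ)| * d(τ)` (with the sum over
`(k+1)`-element subsets `τ` of `X`, each evaluated on any fixed ordering of `τ`)
is stated in the equivalent form `(k+1)! * d t ≤ ∑_s |α(s)| * d(s)` with the sum
over all `(k+1)`-tuples `s`: since `α` is alternating and `d` is permutation
invariant, the summand depends only on the underlying set of `s` (it vanishes on
tuples with repeated entries), and each `(k+1)`-element subset has exactly
`(k+1)!` orderings. -/
structure IsStrongPseudoMetric {X : Type*} [Fintype X] [DecidableEq X] (k : ℕ)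
    (d : (Fin (k + 1) → X) → ℝ) : Prop where
  nonneg : ∀ x, 0 ≤ d x
  eq_zero : ∀ x, ¬ Function.Injective x → d x = 0
  perm : ∀ (π : Equiv.Perm (Fin (k + 1))) (x), d (x ∘ π) = d x
  strong_simplex : ∀ t : Fin (k + 1) → X, Function.Injective t →
    ∀ α : (Fin (k + 1) → X) → ℝ, AltChain α → bdry α = bdry (unitChain t) →
      ((k + 1).factorial : ℝ) * d t ≤ ∑ s : Fin (k + 1) → X, |α s| * d s

/-- `(X, d)` is a coboundary metric of arity `k + 2` in `m` dimensions with respect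
to the norm `ν` on `ℝ^m`: there are chains `f 1, …, f m` on `(k+1)`-tuples (i.e.
`(k+2)-2`-dimensional chains for arity `k+2`) whose simultaneous coboundary
realizes `d` on injective tuples, and `d` vanishes on non-injective tuples. -/
def IsCoboundaryMetric {X : Type*} (k m : ℕ) (ν : (Fin m → ℝ) → ℝ)
    (d : (Fin (k + 2) → X) → ℝ) : Prop :=
  ∃ f : Fin m → ((Fin (k + 1) → X) → ℝ),
    (∀ i, AltChain (f i)) ∧
    (∀ x, Function.Injective x → d x = ν (fun i => cobdry (f i) x)) ∧
    (∀ x, ¬ Function.Injective x → d x = 0)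

/-- `ν` is a norm on `ℝ^m`. -/
structure IsNorm {m : ℕ} (ν : (Fin m → ℝ) → ℝ) : Prop where
  nonneg : ∀ x, 0 ≤ ν x
  eq_zero_iff : ∀ x, ν x = 0 ↔ x = 0
  homog : ∀ (c : ℝ) (x), ν (c • x) = |c| * ν x
  triangle : ∀ x y, ν (x + y) ≤ ν x + ν y

/-- The `ℓ_p` norm on `ℝ^m` for real `p`. -/
noncomputable def lpNorm (p : ℝ) {m : ℕ} (x : Fin m → ℝ) : ℝ :=
  (∑ i, |x i| ^ p) ^ (1 / p)

/-- The `ℓ_1` norm on `ℝ^m`. -/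
noncomputable def l1Norm {m : ℕ} (x : Fin m → ℝ) : ℝ := ∑ i, |x i|

/-- The `ℓ_2` (Euclidean) norm on `ℝ^m`. -/
noncomputable def l2Norm {m : ℕ} (x : Fin m → ℝ) : ℝ := Real.sqrt (∑ i, x i ^ 2)

/-- The `ℓ_∞` norm on `ℝ^m` (the sup norm, which is the norm of `Fin m → ℝ`). -/
noncomputable def linfNorm {m : ℕ} (x : Fin m → ℝ) : ℝ := ‖x‖

/- The apex extension of `d` (of arity `K`), with the apex being
`none : Option X` (a new element not in `X`): on an injective `(K+1)`-tuple
containing the apex in position `i` it is `d` of the tuple with position `i`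
removed, and it is `0` on all other tuples. -/
open Classical in
noncomputable def apexExt {X : Type*} {K : ℕ} (d : (Fin K → X) → ℝ) :
    (Fin (K + 1) → Option X) → ℝ := fun x =>
  if h : Function.Injective x ∧ ∃ i, x i = none then
    d (fun j =>
      Option.get (x ((Classical.choose h.2).succAbove j))
        (by
          rw [Option.isSome_iff_ne_none]
          intro hnone
          exact Fin.succAbove_ne (Classical.choose h.2) j
            (h.1 (hnone.trans (Classical.choose_spec h.2).symm))))
  else 0

/-- The `K`-dimensional volume of the simplex with vertices `y 0, …, y K` in `ℝ^m`:
`(1/K!) * √(det (AᵀA))` where `A` is the `m × K` matrix with columns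
`y i - y 0`, `i = 1, …, K`. -/
noncomputable def simplexVolume {m K : ℕ} (y : Fin (K + 1) → (Fin m → ℝ)) : ℝ :=
  (1 / (K.factorial : ℝ)) *
    Real.sqrt
      (Matrix.det
        (Matrix.of fun i j : Fin K =>
          ∑ l : Fin m, (y i.succ l - y 0 l) * (y j.succ l - y 0 l)))

/-! For a pseudometric `d` and a unit `(t₀, t₁)`-flow `α`, pair `α` with the coboundary of the
1-Lipschitz function `f = d(·, t₁)`. The pairing depends only on `∂α = ∂1_t`, so it equals
`2 (f t₀ - f t₁) = 2 d(t₀, t₁)`, while termwise it is at most `∑ |α(s)| d(s)`. Conversely, the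
triangle inequality through `y` is the strong simplex inequality for the flow `1_{(x₀,y)} + 1_{(y,x₁)}`,
whose cost is at most `2 d(x₀, y) + 2 d(y, x₁)`. -/

open Finset

section

variable {X : Type*}

lemma sum_perm_fin_two {M : Type*} [AddCommMonoid M] (f : Equiv.Perm (Fin 2) → M) :
    ∑ π, f π = f 1 + f (Equiv.swap 0 1) := by
  have huniv : (univ : Finset (Equiv.Perm (Fin 2))) = {1, Equiv.swap 0 1} := by decide
  rw [huniv, sum_pair (by decide)]

lemma pair_eta (s : Fin 2 → X) : ![s 0, s 1] = s := by
  ext i; fin_cases i <;> rfl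

lemma AltChain.add {j : ℕ} {α β : (Fin j → X) → ℝ} (hα : AltChain α) (hβ : AltChain β) :
    AltChain (α + β) := fun π x => by
  simp only [Pi.add_apply, hα π x, hβ π x, mul_add]

section Chains

variable [Fintype X]

lemma bdry_add {j : ℕ} (α β : (Fin (j + 1) → X) → ℝ) : bdry (α + β) = bdry α + bdry β := by
  funext y; exact sum_add_distrib

lemma sum_mul_tail_eq_sum_bdry_mul {j : ℕ} (α : (Fin (j + 1) → X) → ℝ)
    (g : (Fin j → X) → ℝ) :
    ∑ s, α s * g (Fin.tail s) = ∑ y, bdry α y * g y := by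
  rw [← (Fin.consEquiv fun _ => X).sum_comp, Fintype.sum_prod_type, sum_comm]
  simp only [bdry, sum_mul]
  rfl

lemma AltChain.sum_mul_apply_zero {α : (Fin 2 → X) → ℝ} (hα : AltChain α)
    (f : X → ℝ) : ∑ s, α s * f (s 0) = -∑ s, α s * f (s 1) := by
  rw [← sum_neg_distrib]
  refine Fintype.sum_equiv ((Equiv.swap 0 1).arrowCongr (Equiv.refl X)) _ _ fun s => ?_
  change _ = -(α (s ∘ Equiv.swap 0 1) * f (s (Equiv.swap 0 1 1)))
  rw [hα, Equiv.Perm.sign_swap (by decide), Equiv.swap_apply_right]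
  simp

lemma AltChain.sum_mul_sub_eq {α : (Fin 2 → X) → ℝ} (hα : AltChain α) (f : X → ℝ) :
    ∑ s, α s * (f (s 0) - f (s 1)) = -2 * ∑ y, bdry α y * f (y 0) := by
  have h := sum_mul_tail_eq_sum_bdry_mul α fun y => f (y 0)
  simp only [mul_sub, sum_sub_distrib, hα.sum_mul_apply_zero]
  change -∑ s, α s * f (Fin.tail s 0) - ∑ s, α s * f (Fin.tail s 0) = _
  rw [h]
  ring

end Chains

section UnitChain

variable [DecidableEq X] {j : ℕ}

lemma altChain_unitChain (t : Fin j → X) : AltChain (unitChain t) := fun σ x => by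
  simp only [unitChain, mul_sum]
  refine (Fintype.sum_equiv (Equiv.mulRight σ) _ _ fun π => ?_).symm
  have hcomp : x ∘ σ = t ∘ ⇑(π * σ) ↔ x = t ∘ π := by
    rw [Equiv.Perm.coe_mul, ← Function.comp_assoc]
    exact σ.surjective.injective_comp_right.eq_iff
  simp only [Equiv.coe_mulRight, hcomp, Equiv.Perm.sign_mul, Units.val_mul, Int.cast_mul]
  split_ifs <;> ring

variable [Fintype X]

lemma sum_unitChain_mul (t : Fin j → X) (g : (Fin j → X) → ℝ) :
    ∑ s, unitChain t s * g s = ∑ π : Equiv.Perm (Fin j), (Equiv.Perm.sign π : ℝ) * g (t ∘ π) := by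
  simp only [unitChain, sum_mul, ite_mul, zero_mul]
  rw [sum_comm]
  simp

lemma sum_abs_unitChain_mul_le {d : (Fin j → X) → ℝ} (hd : ∀ s, 0 ≤ d s)
    (hperm : ∀ (π : Equiv.Perm (Fin j)) s, d (s ∘ π) = d s) (t : Fin j → X) :
    ∑ s, |unitChain t s| * d s ≤ j.factorial * d t := by
  calc ∑ s, |unitChain t s| * d s
      ≤ ∑ s, ∑ π : Equiv.Perm (Fin j), if s = t ∘ π then d s else 0 := by
        gcongr with s
        refine (mul_le_mul_of_nonneg_right (abs_sum_le_sum_abs _ _) (hd s)).trans_eq ?_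
        rw [sum_mul]
        refine sum_congr rfl fun π _ => ?_
        split_ifs <;> simp [← Int.cast_abs]
    _ = j.factorial * d t := by
        rw [sum_comm]
        simp [hperm, Fintype.card_perm]

lemma sum_unitChain_two_mul (t : Fin 2 → X) (g : (Fin 2 → X) → ℝ) :
    ∑ s, unitChain t s * g s = g t - g (t ∘ Equiv.swap 0 1) := by
  rw [sum_unitChain_mul, sum_perm_fin_two, Equiv.Perm.sign_swap (by decide)]
  simp
  ring

lemma bdry_unitChain_pair (a b : X) (y : Fin 1 → X) :
    bdry (unitChain ![a, b]) y = (if y 0 = b then 1 else 0) - (if y 0 = a then 1 else 0) := by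
  have h := sum_mul_tail_eq_sum_bdry_mul (unitChain ![a, b]) fun z => if z = y then 1 else 0
  rw [sum_unitChain_two_mul] at h
  simp only [mul_ite, mul_one, mul_zero, sum_ite_eq', mem_univ, if_true] at h
  rw [← h]
  simp [funext_iff, eq_comm]

end UnitChain

lemma bdry_unitChain_add_unitChain [Fintype X] [DecidableEq X] (a b c : X) :
    bdry (unitChain ![a, b] + unitChain ![b, c]) = bdry (unitChain ![a, c]) := by
  funext y
  simp only [bdry_add, Pi.add_apply, bdry_unitChain_pair]
  ring

namespace IsPseudoMetric

variable {d : (Fin 2 → X) → ℝ} (hd : IsPseudoMetric 2 d)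
include hd

lemma apply_self (a : X) : d ![a, a] = 0 :=
  hd.eq_zero _ fun h => zero_ne_one (h (rfl : ![a, a] 0 = ![a, a] 1))

lemma comm (a b : X) : d ![a, b] = d ![b, a] := by
  rw [← hd.perm (Equiv.swap 0 1)]
  congr 1
  ext i; fin_cases i <;> rfl

lemma triangle (a b c : X) : d ![a, c] ≤ d ![a, b] + d ![b, c] := by
  have h := hd.simplex ![a, c] b
  rw [Fin.sum_univ_two] at h
  convert h using 1
  rw [add_comm]
  congr 2 <;> ext i <;> fin_cases i <;> rfl

lemma abs_sub_le (a b c : X) : |d ![a, c] - d ![b, c]| ≤ d ![a, b] := by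
  rw [abs_sub_le_iff]
  constructor
  · linarith [hd.triangle a b c]
  · linarith [hd.triangle b a c, hd.comm a b]

end IsPseudoMetric

theorem IsPseudoMetric.isStrongPseudoMetric [Fintype X] [DecidableEq X]
    {d : (Fin 2 → X) → ℝ} (hd : IsPseudoMetric 2 d) : IsStrongPseudoMetric 1 d := by
  refine ⟨hd.nonneg, hd.eq_zero, hd.perm, fun t _ α hα hbdry => ?_⟩
  set f : X → ℝ := fun z => d ![z, t 1]
  calc ((1 + 1).factorial : ℝ) * d t = ∑ s, unitChain t s * (f (s 0) - f (s 1)) := by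
        rw [sum_unitChain_two_mul]
        simp [f, hd.apply_self, pair_eta]
        ring
    _ = ∑ s, α s * (f (s 0) - f (s 1)) := by
        rw [hα.sum_mul_sub_eq, (altChain_unitChain t).sum_mul_sub_eq, hbdry]
    _ ≤ ∑ s, |α s| * d s := by
        refine sum_le_sum fun s _ => ?_
        calc α s * (f (s 0) - f (s 1)) ≤ |α s| * |f (s 0) - f (s 1)| := by
              rw [← abs_mul]
              exact le_abs_self _
          _ ≤ |α s| * d s := by
              gcongr
              rw [← pair_eta s]
              exact hd.abs_sub_le (s 0) (s 1) (t 1)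

theorem IsStrongPseudoMetric.isPseudoMetric [Fintype X] [DecidableEq X]
    {d : (Fin 2 → X) → ℝ} (hd : IsStrongPseudoMetric 1 d) : IsPseudoMetric 2 d := by
  refine ⟨hd.nonneg, hd.eq_zero, hd.perm, fun x y => ?_⟩
  have hupdate : ∑ i, d (Function.update x i y) = d ![y, x 1] + d ![x 0, y] := by
    rw [Fin.sum_univ_two]
    congr 2 <;> ext i <;> fin_cases i <;> simp
  rw [hupdate]
  by_cases hx : Function.Injective x
  · have hflow := bdry_unitChain_add_unitChain (x 0) y (x 1)
    rw [pair_eta] at hflow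
    have key := hd.strong_simplex x hx _ ((altChain_unitChain _).add (altChain_unitChain _)) hflow
    have h₁ := sum_abs_unitChain_mul_le hd.nonneg hd.perm ![x 0, y]
    have h₂ := sum_abs_unitChain_mul_le hd.nonneg hd.perm ![y, x 1]
    have hsplit : ∑ s, |unitChain ![x 0, y] s + unitChain ![y, x 1] s| * d s ≤
        ∑ s, |unitChain ![x 0, y] s| * d s + ∑ s, |unitChain ![y, x 1] s| * d s := by
      rw [← sum_add_distrib]
      gcongr with s
      rw [← add_mul]
      exact mul_le_mul_of_nonneg_right (abs_add_le _ _) (hd.nonneg s)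
    norm_num at key h₁ h₂
    linarith
  · rw [hd.eq_zero x hx]
    exact add_nonneg (hd.nonneg _) (hd.nonneg _)

end

/-- for `k = 2` the weak and strong notions coincide: `(X, d)` is a
pseudo 2-metric (a finite pseudometric) iff it is a strong pseudo 2-metric. -/
theorem stmt_2 {X : Type*} [Fintype X] [DecidableEq X] (d : (Fin 2 → X) → ℝ) :
    IsPseudoMetric 2 d ↔ IsStrongPseudoMetric 1 d :=
  ⟨IsPseudoMetric.isStrongPseudoMetric, IsStrongPseudoMetric.isPseudoMetric⟩
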